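/- arXiv:1107.3097 — 4 statements merged into one kernel-verified Lean document; each statement's English description precedes it below -/
import Mathlib

section
/- Cone-splitting principle for homogeneous maps: if h : ℝⁿ → N is k-homogeneous at y with respect to a k-plane V, and h is 0-homogeneous at a point z ∈ ℝⁿ with z ∉ y + V, then h is (k+1)-homogeneous at y with respect to the (k+1)-plane span{z−y, V}. -/
/-- Cone-splitting principle for homogeneous maps: if `h` is `k`-homogeneous at `y` with
respect to a `k`-plane `V`, and `h` is `0`-homogeneous at `z₀ ∉ y + V`, then `h` is
`(k+1)`-homogeneous at `y` with respect to `span {z₀ - y} ⊔ V`. -/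
theorem stmt1 (n k : ℕ) {N : Type*} [MetricSpace N] [MeasurableSpace N]
    (h : EuclideanSpace ℝ (Fin n) → N) (hmeas : Measurable h)
    (y z₀ : EuclideanSpace ℝ (Fin n))
    (V : Submodule ℝ (EuclideanSpace ℝ (Fin n))) (hV : Module.finrank ℝ V = k)
    (hhom : ∀ lam : ℝ, 0 < lam → ∀ w, h (y + lam • w) = h (y + w))
    (htrans : ∀ w, ∀ v ∈ V, h (w + v) = h w)
    (hhom₀ : ∀ lam : ℝ, 0 < lam → ∀ w, h (z₀ + lam • w) = h (z₀ + w))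
    (hz₀ : z₀ - y ∉ V) :
    Module.finrank ℝ ↥(Submodule.span ℝ {z₀ - y} ⊔ V) = k + 1 ∧
    (∀ lam : ℝ, 0 < lam → ∀ w, h (y + lam • w) = h (y + w)) ∧
    (∀ w, ∀ v ∈ Submodule.span ℝ {z₀ - y} ⊔ V, h (w + v) = h w) := by
  set u := z₀ - y with hu
  have hz₀y : z₀ = y + u := by simp [hu]
  -- step 1 : scaling invariance in the cone
  have step1 : ∀ (w : EuclideanSpace ℝ (Fin n)) (a b : ℝ), 0 < a → 0 < b →
      h (y + a • w + b • u) = h (y + w + u) := by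
    intro w a b ha hb
    have e1 : y + a • w + b • u = y + b • ((a / b) • w + u) := by
      rw [smul_add, smul_smul]
      rw [mul_div_cancel₀ _ hb.ne']
      module
    rw [e1, hhom b hb]
    have e2 : y + ((a / b) • w + u) = z₀ + (a / b) • w := by rw [hz₀y]; module
    rw [e2, hhom₀ (a / b) (div_pos ha hb), hz₀y]
    congr 1; module
  -- step 2 : translation by u at points near y
  have step2 : ∀ w : EuclideanSpace ℝ (Fin n), h (y + w + u) = h (y + w) := by
    intro w
    have e1 : y + w = z₀ + (w - u) := by rw [hz₀y]; module
    have e2 : z₀ + (1 / 2 : ℝ) • (w - u) = y + (1 / 2 : ℝ) • w + (1 / 2 : ℝ) • u := by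
      rw [hz₀y]; module
    calc h (y + w + u) = h (y + (1 / 2 : ℝ) • w + (1 / 2 : ℝ) • u) :=
          (step1 w (1 / 2) (1 / 2) (by norm_num) (by norm_num)).symm
      _ = h (z₀ + (1 / 2 : ℝ) • (w - u)) := by rw [e2]
      _ = h (z₀ + (w - u)) := hhom₀ (1 / 2) (by norm_num) _
      _ = h (y + w) := by rw [← e1]
  -- step 3 : full translation invariance by t • u
  have step3 : ∀ (x : EuclideanSpace ℝ (Fin n)) (t : ℝ), h (x + t • u) = h x := by
    have pos : ∀ (x : EuclideanSpace ℝ (Fin n)) (t : ℝ), 0 < t → h (x + t • u) = h x := by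
      intro x t ht
      have e1 : x + t • u = y + t • ((1 / t) • (x - y) + u) := by
        rw [smul_add, smul_smul, mul_one_div, div_self ht.ne']
        module
      have e2 : y + ((1 / t) • (x - y) + u) = y + (1 / t) • (x - y) + u := by module
      rw [e1, hhom t ht, e2, step2, hhom (1 / t) (by positivity)]
      congr 1; module
    intro x t
    rcases lt_trichotomy t 0 with htn | rfl | htp
    · have := pos (x + t • u) (-t) (by linarith)
      rw [show x + t • u + (-t) • u = x by module] at this
      exact this.symm
    · simp
    · exact pos x t htp
  refine ⟨?_, hhom, ?_⟩
  · -- dimension count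
    have hune : u ≠ 0 := fun h0 => hz₀ (h0 ▸ V.zero_mem)
    have hinf : Submodule.span ℝ {u} ⊓ V = ⊥ := by
      rw [Submodule.eq_bot_iff]
      rintro x ⟨hx1, hx2⟩
      simp only [SetLike.mem_coe, Submodule.mem_span_singleton] at hx1
      obtain ⟨a, rfl⟩ := hx1
      rcases eq_or_ne a 0 with rfl | ha
      · simp
      · exact absurd (by simpa [smul_smul, inv_mul_cancel₀ ha] using V.smul_mem a⁻¹ hx2) hz₀
    have := Submodule.finrank_sup_add_finrank_inf_eq (Submodule.span ℝ {u}) V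
    rw [hinf, finrank_span_singleton hune, hV] at this
    simpa [add_comm] using this
  · intro w v hv
    rw [Submodule.mem_sup] at hv
    obtain ⟨s, hs, v', hv', rfl⟩ := hv
    rw [Submodule.mem_span_singleton] at hs
    obtain ⟨a, rfl⟩ := hs
    rw [show w + (a • u + v') = w + a • u + v' by module, htrans _ v' hv', step3]
end

section
/- Cone-splitting principle for dilation-invariant functions: let u : ℝⁿ → ℝ satisfy u(λx) = u(x) for all λ > 0 and x ∈ ℝⁿ, and suppose u is also invariant under translation by some nonzero vector v, i.e. u(x+v) = u(x) for all x. Then u is invariant under translation by every vector in span{v}: u(x + tv) = u(x) for all t ∈ ℝ, x ∈ ℝⁿ, and moreover u is 0-homogeneous at every point of span{v}. -/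
/-- Cone-splitting principle for dilation-invariant functions: a dilation-invariant
`u : ℝⁿ → ℝ` which is invariant under translation by some `v ≠ 0` is invariant under
translation by every vector of `span {v}`, and is `0`-homogeneous at every point of
`span {v}`. -/
theorem stmt2 (n : ℕ) (u : EuclideanSpace ℝ (Fin n) → ℝ)
    (v : EuclideanSpace ℝ (Fin n)) (hv : v ≠ 0)
    (hdil : ∀ lam : ℝ, 0 < lam → ∀ x, u (lam • x) = u x)
    (htrans : ∀ x, u (x + v) = u x) :
    (∀ (t : ℝ) (x : EuclideanSpace ℝ (Fin n)), u (x + t • v) = u x) ∧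
    (∀ p ∈ Submodule.span ℝ ({v} : Set (EuclideanSpace ℝ (Fin n))),
      ∀ lam : ℝ, 0 < lam → ∀ z, u (p + lam • z) = u (p + z)) := by
  have hpos : ∀ t : ℝ, 0 < t → ∀ x, u (x + t • v) = u x := by
    intro t ht x
    have h := hdil t⁻¹ (by positivity) (x + t • v)
    rw [smul_add, smul_smul, inv_mul_cancel₀ ht.ne', one_smul, htrans] at h
    rw [← h]
    exact hdil t⁻¹ (by positivity) x
  have h1 : ∀ (t : ℝ) (x : EuclideanSpace ℝ (Fin n)), u (x + t • v) = u x := by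
    intro t x
    rcases lt_trichotomy t 0 with h | h | h
    · have h2 := hpos (-t) (by linarith) (x + t • v)
      rw [add_assoc, ← add_smul, add_neg_cancel, zero_smul, add_zero] at h2
      exact h2.symm
    · simp [h]
    · exact hpos t h x
  refine ⟨h1, ?_⟩
  intro p hp lam hl z
  obtain ⟨c, rfl⟩ := Submodule.mem_span_singleton.mp hp
  have key : c • v + lam • z = lam • ((lam⁻¹ * c) • v + z) := by
    rw [smul_add, smul_smul, ← mul_assoc, mul_inv_cancel₀ hl.ne', one_mul]
  rw [key, hdil lam hl, add_comm ((lam⁻¹ * c) • v) z, h1, add_comm (c • v) z, h1]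
end

section
/- Cone-splitting principle for varifolds/measures: let μ be a measure on ℝⁿ that is 0-conical (dilation invariant: μ(λA) = λ^k μ(A) for all λ > 0, in the sense of being invariant as a k-dimensional cone measure) and invariant under translations by all vectors in an ℓ-plane V. If μ is additionally 0-conical at some point y ∉ V (i.e. the translated measure μ(y + ·) is dilation invariant), then μ is invariant under translations by all vectors in the (ℓ+1)-plane span{y, V}. -/
open Pointwise

/-- Cone-splitting principle for measures: if `μ` is `k`-dilation-invariant at `0`,
invariant under translations by an `ℓ`-plane `V`, and `k`-dilation-invariant at some
`y ∉ V`, then `μ` is invariant under translations by all vectors of `span {y} ⊔ V`. -/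
theorem stmt17 (n k ℓ : ℕ) (μ : MeasureTheory.Measure (EuclideanSpace ℝ (Fin n)))
    (V : Submodule ℝ (EuclideanSpace ℝ (Fin n))) (hV : Module.finrank ℝ V = ℓ)
    (y : EuclideanSpace ℝ (Fin n)) (hy : y ∉ V)
    (hdil0 : ∀ (A : Set (EuclideanSpace ℝ (Fin n))) (lam : ℝ), 0 < lam →
      μ (lam • A) = ENNReal.ofReal (lam ^ k) * μ A)
    (htrans : ∀ (A : Set (EuclideanSpace ℝ (Fin n))), ∀ v ∈ V,
      μ ((fun x => x + v) '' A) = μ A)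
    (hdily : ∀ (A : Set (EuclideanSpace ℝ (Fin n))) (lam : ℝ), 0 < lam →
      μ ((fun x => y + lam • x) '' A) =
        ENNReal.ofReal (lam ^ k) * μ ((fun x => y + x) '' A)) :
    ∀ (A : Set (EuclideanSpace ℝ (Fin n))), ∀ v ∈ Submodule.span ℝ {y} ⊔ V,
      μ ((fun x => x + v) '' A) = μ A := by
  -- Step 1: translation invariance along `t • y` for `t < 1`.
  have h1 : ∀ (t : ℝ), t < 1 → ∀ A : Set (EuclideanSpace ℝ (Fin n)),
      μ ((fun x => x + t • y) '' A) = μ A := by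
    intro t ht A
    set lam : ℝ := 1 - t with hlam
    have hlpos : 0 < lam := by simp only [hlam]; linarith
    have hlne : lam ≠ 0 := ne_of_gt hlpos
    set B : Set (EuclideanSpace ℝ (Fin n)) := (fun x => x + (-y)) '' (lam⁻¹ • A) with hB
    have e1 : (fun x => y + lam • x) '' B = (fun x => x + t • y) '' A := by
      rw [hB, Set.image_image,
        show (lam⁻¹ • A : Set _) = (fun x => lam⁻¹ • x) '' A from (Set.image_smul ..).symm,
        Set.image_image]
      apply Set.image_congr'
      intro x
      rw [smul_add, smul_smul, mul_inv_cancel₀ hlne, one_smul, smul_neg, hlam]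
      module
    have e2 : (fun x => y + x) '' B = lam⁻¹ • A := by
      rw [hB, Set.image_image]
      have : (fun x : EuclideanSpace ℝ (Fin n) => y + (x + -y)) = id := by
        funext x; simp
      rw [this, Set.image_id]
    calc μ ((fun x => x + t • y) '' A)
        = μ ((fun x => y + lam • x) '' B) := by rw [e1]
      _ = ENNReal.ofReal (lam ^ k) * μ ((fun x => y + x) '' B) := hdily B lam hlpos
      _ = ENNReal.ofReal (lam ^ k) * μ (lam⁻¹ • A) := by rw [e2]
      _ = ENNReal.ofReal (lam ^ k) * (ENNReal.ofReal (lam⁻¹ ^ k) * μ A) := by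
          rw [hdil0 A lam⁻¹ (inv_pos.mpr hlpos)]
      _ = μ A := by
          rw [← mul_assoc, ← ENNReal.ofReal_mul (by positivity), ← mul_pow,
            mul_inv_cancel₀ hlne, one_pow, ENNReal.ofReal_one, one_mul]
  -- Step 2: translation invariance along `t • y` for all `t`.
  have hty : ∀ (t : ℝ), ∀ A : Set (EuclideanSpace ℝ (Fin n)),
      μ ((fun x => x + t • y) '' A) = μ A := by
    intro t A
    by_cases ht : t < 1
    · exact h1 t ht A
    · push_neg at ht
      have h := h1 (-t) (by linarith) ((fun x => x + t • y) '' A)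
      rw [Set.image_image] at h
      have : (fun x : EuclideanSpace ℝ (Fin n) => x + t • y + (-t) • y) = id := by
        funext x; simp [neg_smul]
      rw [this, Set.image_id] at h
      exact h.symm
  -- Step 3: conclude.
  intro A v hv
  obtain ⟨a, ha, b, hb, rfl⟩ := Submodule.mem_sup.mp hv
  obtain ⟨t, rfl⟩ := Submodule.mem_span_singleton.mp ha
  have : (fun x : EuclideanSpace ℝ (Fin n) => x + (t • y + b)) '' A
      = (fun x => x + b) '' ((fun x => x + t • y) '' A) := by
    rw [Set.image_image]; simp [add_assoc]
  rw [this, htrans _ b hb, hty]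
end

section
/- If a measure μ on ℝⁿ is dilation invariant at two distinct points p ≠ q (μ(p + λA) = λ^k μ(p+A) and μ(q + λA) = λ^k μ(q+A) for all λ > 0), then μ is invariant under translation by q − p, and consequently dilation invariant at every point of the line through p and q. -/
/-- Two-point rigidity: if `μ` is `k`-dilation-invariant at two distinct points `p ≠ q`,
then `μ` is invariant under translation by `q - p` and dilation invariant at every
point of the line through `p` and `q`. -/
theorem stmt18 (n k : ℕ) (μ : MeasureTheory.Measure (EuclideanSpace ℝ (Fin n)))
    (p q : EuclideanSpace ℝ (Fin n)) (hpq : p ≠ q)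
    (hp : ∀ (A : Set (EuclideanSpace ℝ (Fin n))) (lam : ℝ), 0 < lam →
      μ ((fun x => p + lam • x) '' A) =
        ENNReal.ofReal (lam ^ k) * μ ((fun x => p + x) '' A))
    (hq : ∀ (A : Set (EuclideanSpace ℝ (Fin n))) (lam : ℝ), 0 < lam →
      μ ((fun x => q + lam • x) '' A) =
        ENNReal.ofReal (lam ^ k) * μ ((fun x => q + x) '' A)) :
    (∀ A : Set (EuclideanSpace ℝ (Fin n)), μ ((fun x => x + (q - p)) '' A) = μ A) ∧
    (∀ (t : ℝ) (A : Set (EuclideanSpace ℝ (Fin n))) (lam : ℝ), 0 < lam →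
      μ ((fun x => (p + t • (q - p)) + lam • x) '' A) =
        ENNReal.ofReal (lam ^ k) * μ ((fun x => (p + t • (q - p)) + x) '' A)) := by
  clear hpq
  -- centered forms of the dilation invariance
  have hp' : ∀ (B : Set (EuclideanSpace ℝ (Fin n))) (lam : ℝ), 0 < lam →
      μ ((fun x => p + lam • (x - p)) '' B) = ENNReal.ofReal (lam ^ k) * μ B := by
    intro B lam hl
    have h := hp ((fun x => x - p) '' B) lam hl
    rw [Set.image_image, Set.image_image] at h
    simpa using h
  have hq' : ∀ (B : Set (EuclideanSpace ℝ (Fin n))) (lam : ℝ), 0 < lam →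
      μ ((fun x => q + lam • (x - q)) '' B) = ENNReal.ofReal (lam ^ k) * μ B := by
    intro B lam hl
    have h := hq ((fun x => x - q) '' B) lam hl
    rw [Set.image_image, Set.image_image] at h
    simpa using h
  -- translation invariance by s • (q - p) for s < 1
  have transA : ∀ (s : ℝ), s < 1 → ∀ B : Set (EuclideanSpace ℝ (Fin n)),
      μ ((fun x => x + s • (q - p)) '' B) = μ B := by
    intro s hs B
    have h1 : (0:ℝ) < 1 - s := by linarith
    have h1' : (1:ℝ) - s ≠ 0 := ne_of_gt h1
    have hlam : (0:ℝ) < (1 - s)⁻¹ := by positivity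
    have key : (fun x => x + s • (q - p)) '' B
        = (fun x => q + (1 - s) • (x - q)) ''
            ((fun x => p + (1 - s)⁻¹ • (x - p)) '' B) := by
      rw [Set.image_image]
      apply Set.image_congr'
      intro x
      match_scalars <;> (field_simp; try ring)
    rw [key, hq' _ _ h1, hp' _ _ hlam, ← mul_assoc,
      ← ENNReal.ofReal_mul (by positivity), ← mul_pow,
      mul_inv_cancel₀ h1']
    simp
  -- translation invariance by t • (q - p) for all t
  have transB : ∀ (t : ℝ) (B : Set (EuclideanSpace ℝ (Fin n))),
      μ ((fun x => x + t • (q - p)) '' B) = μ B := by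
    intro t B
    obtain ⟨m, hm⟩ := exists_nat_gt t
    set s := t / ((m : ℝ) + 1) with hs
    have hmpos : (0:ℝ) < (m : ℝ) + 1 := by positivity
    have hs1 : s < 1 := by
      rw [hs, div_lt_one hmpos]
      linarith
    have iter : ∀ j : ℕ, ∀ B : Set (EuclideanSpace ℝ (Fin n)),
        μ ((fun x => x + ((j : ℝ) * s) • (q - p)) '' B) = μ B := by
      intro j
      induction j with
      | zero => intro B; simp
      | succ j ih =>
        intro B
        have heq : (fun x => x + (((j : ℕ) + 1 : ℕ) * s : ℝ) • (q - p)) '' B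
            = (fun x => x + s • (q - p)) ''
                ((fun x => x + ((j : ℝ) * s) • (q - p)) '' B) := by
          rw [Set.image_image]
          apply Set.image_congr'
          intro x
          push_cast
          module
        rw [heq, transA s hs1, ih]
    have ht : ((m + 1 : ℕ) : ℝ) * s = t := by
      rw [hs]
      push_cast
      field_simp
    have h2 := iter (m + 1) B
    rwa [ht] at h2
  refine ⟨?_, ?_⟩
  · intro A
    have h := transB 1 A
    simpa using h
  · intro t A lam hl
    have e1 : (fun x => (p + t • (q - p)) + lam • x) '' A
        = (fun x => x + t • (q - p)) '' ((fun x => p + lam • x) '' A) := by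
      rw [Set.image_image]
      apply Set.image_congr'
      intro x
      module
    have e2 : (fun x => (p + t • (q - p)) + x) '' A
        = (fun x => x + t • (q - p)) '' ((fun x => p + x) '' A) := by
      rw [Set.image_image]
      apply Set.image_congr'
      intro x
      module
    rw [e1, e2, transB, transB, hp A lam hl]
end
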